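/- arXiv:2112.13530 — 3 statements merged into one kernel-verified Lean document; each statement's English description precedes it below -/
import Mathlib

section
/- Let (X, μ_X) be a σ-finite measure space, let (Θ, m) be a measure space with g : Θ → ℝ a probability density with respect to m that is positive a.e., let f : X × Θ → ℝ be measurable with ∫_Θ f(x, θ) dm(θ) = 1 for μ_X-a.e. x, and let α : X → ℝ be such that α and α² are μ_X-integrable, x ↦ χ²(f(x,·) ‖ g) is μ_X-integrable, and (x, θ) ↦ (f(x,θ)/g(θ) − 1) is square-integrable with respect to the product of μ_X and the measure g·m (so that the Fubini and Cauchy–Schwarz manipulations are valid). Then χ²( ∫_X α(x)·f(x,·) dμ_X(x) ‖ g ) ≤ (∫_X α(x)² dμ_X(x)) · (∫_X χ²(f(x,·) ‖ g) dμ_X(x)) + (∫_X α(x) dμ_X(x) − 1)². -/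
/-!
Put `A θ = ∫ α(x) (f(x,θ)/g(θ) − 1) dμ_X`, so that `(∫ α f(·,θ) dμ_X)/g(θ) − 1 = A θ + (∫ α − 1)`
wherever `g(θ) > 0`. Expanding the square, the cross term `∫ A g dm` vanishes by Fubini because
every `f(x,·)` has the same mass as `g`, and `A(θ)² ≤ (∫ α²) ∫ (f(x,θ)/g(θ) − 1)² dμ_X` by
Cauchy–Schwarz in `x`; integrating against `g` and swapping the integrals gives the bound.
-/

open MeasureTheory

section IntegralInequalities

variable {Ω : Type*} [MeasurableSpace Ω] {μ : Measure Ω}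

lemma sq_integral_mul_le_integral_sq_mul_integral_sq {u v : Ω → ℝ}
    (hu : MemLp u 2 μ) (hv : MemLp v 2 μ) :
    (∫ x, u x * v x ∂μ) ^ 2 ≤ (∫ x, u x ^ 2 ∂μ) * ∫ x, v x ^ 2 ∂μ := by
  have inner_toLp : ∀ {u v : Ω → ℝ} (hu : MemLp u 2 μ) (hv : MemLp v 2 μ),
      inner ℝ (hu.toLp u) (hv.toLp v) = ∫ x, u x * v x ∂μ := by
    intro u v hu hv
    rw [L2.inner_def]
    refine integral_congr_ae ?_
    filter_upwards [hu.coeFn_toLp, hv.coeFn_toLp] with x hux hvx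
    simp [hux, hvx, mul_comm]
  simpa only [inner_toLp, ← sq] using real_inner_mul_inner_self_le (hu.toLp u) (hv.toLp v)

lemma integrable_mul_mul_of_integrable_sq_mul {u v w : Ω → ℝ} (hu : AEStronglyMeasurable u μ)
    (hv : AEStronglyMeasurable v μ) (hw : AEStronglyMeasurable w μ) (hw0 : ∀ᵐ x ∂μ, 0 ≤ w x)
    (hu2 : Integrable (fun x => u x ^ 2 * w x) μ) (hv2 : Integrable (fun x => v x ^ 2 * w x) μ) :
    Integrable (fun x => u x * v x * w x) μ := by
  refine ((hu2.add hv2).div_const 2).mono' ((hu.mul hv).mul hw) ?_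
  filter_upwards [hw0] with x hx
  rw [Real.norm_eq_abs, abs_mul, abs_of_nonneg hx, abs_mul]
  have : |u x| * |v x| ≤ (u x ^ 2 + v x ^ 2) / 2 := by
    nlinarith [sq_nonneg (|u x| - |v x|), sq_abs (u x), sq_abs (v x)]
  simp only [Pi.add_apply]
  nlinarith

lemma integral_div_sub_one_mul {f g : Ω → ℝ} (hf : Integrable f μ) (hg : Integrable g μ)
    (hg0 : ∀ᵐ x ∂μ, g x ≠ 0) :
    ∫ x, (f x / g x - 1) * g x ∂μ = ∫ x, f x ∂μ - ∫ x, g x ∂μ := by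
  rw [← integral_sub hf hg]
  refine integral_congr_ae ?_
  filter_upwards [hg0] with x hx
  field_simp

lemma integral_add_const_sq_mul {a g : Ω → ℝ} (c : ℝ)
    (ha2 : Integrable (fun x => a x ^ 2 * g x) μ) (ha : Integrable (fun x => a x * g x) μ)
    (hg : Integrable g μ) :
    ∫ x, (a x + c) ^ 2 * g x ∂μ
      = ∫ x, a x ^ 2 * g x ∂μ + 2 * c * ∫ x, a x * g x ∂μ + c ^ 2 * ∫ x, g x ∂μ := by
  calc ∫ x, (a x + c) ^ 2 * g x ∂μ
      = ∫ x, (a x ^ 2 * g x + 2 * c * (a x * g x) + c ^ 2 * g x) ∂μ := by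
        congr 1 with x
        ring
    _ = _ := by
        rw [integral_add, integral_add, integral_const_mul, integral_const_mul]
        exacts [ha2, ha.const_mul _, ha2.add (ha.const_mul _), hg.const_mul _]

lemma integral_mul_div_sub_one {a F : Ω → ℝ} {t : ℝ} (ht : t ≠ 0) (ha : Integrable a μ)
    (haF : Integrable (fun x => a x * (F x / t - 1)) μ) :
    (∫ x, a x * F x ∂μ) / t - 1 = ∫ x, a x * (F x / t - 1) ∂μ + (∫ x, a x ∂μ - 1) := by
  have : ∫ x, a x * F x ∂μ = t * ∫ x, (a x * (F x / t - 1) + a x) ∂μ := by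
    rw [← integral_const_mul]
    congr 1 with x
    field_simp
    ring
  rw [this, integral_add haF ha, mul_div_cancel_left₀ _ ht]
  ring

end IntegralInequalities

section Mixture

variable {X Θ : Type*} [MeasurableSpace X] [MeasurableSpace Θ] {μX : Measure X} {m : Measure Θ}
  {g : Θ → ℝ} {f : X → Θ → ℝ} {α : X → ℝ}

lemma ae_memLp_two_div_sub_one [SFinite μX] [SFinite m]
    (hf_meas : Measurable (Function.uncurry f)) (hg_pos : ∀ᵐ θ ∂m, 0 < g θ)
    (hsq : Integrable (fun p : X × Θ => (f p.1 p.2 / g p.2 - 1) ^ 2 * g p.2) (μX.prod m)) :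
    ∀ᵐ θ ∂m, MemLp (fun x => f x θ / g θ - 1) 2 μX := by
  filter_upwards [hg_pos, hsq.prod_left_ae] with θ hθ hint
  refine (memLp_two_iff_integrable_sq ?_).2 ?_
  · exact ((hf_meas.of_uncurry_right.div_const _).sub_const _).aestronglyMeasurable
  · exact (integrable_mul_const_iff (isUnit_iff_ne_zero.2 hθ.ne') _).1 hint

lemma ae_integral_mul_div_sub_one_eq [SFinite μX] [SFinite m]
    (hf_meas : Measurable (Function.uncurry f)) (hg_pos : ∀ᵐ θ ∂m, 0 < g θ)
    (hsq : Integrable (fun p : X × Θ => (f p.1 p.2 / g p.2 - 1) ^ 2 * g p.2) (μX.prod m))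
    (hα : Integrable α μX) (hα2 : MemLp α 2 μX) :
    ∀ᵐ θ ∂m, (∫ x, α x * f x θ ∂μX) / g θ - 1
      = ∫ x, α x * (f x θ / g θ - 1) ∂μX + (∫ x, α x ∂μX - 1) := by
  filter_upwards [hg_pos, ae_memLp_two_div_sub_one hf_meas hg_pos hsq] with θ hθ hh
  exact integral_mul_div_sub_one hθ.ne' hα (hα2.integrable_mul hh)

lemma ae_sq_integral_mul_div_sub_one_mul_le [SFinite μX] [SFinite m]
    (hf_meas : Measurable (Function.uncurry f)) (hg_pos : ∀ᵐ θ ∂m, 0 < g θ)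
    (hsq : Integrable (fun p : X × Θ => (f p.1 p.2 / g p.2 - 1) ^ 2 * g p.2) (μX.prod m))
    (hα : MemLp α 2 μX) :
    ∀ᵐ θ ∂m, (∫ x, α x * (f x θ / g θ - 1) ∂μX) ^ 2 * g θ
      ≤ (∫ x, α x ^ 2 ∂μX) * ∫ x, (f x θ / g θ - 1) ^ 2 * g θ ∂μX := by
  filter_upwards [hg_pos, ae_memLp_two_div_sub_one hf_meas hg_pos hsq] with θ hθ hh
  rw [integral_mul_const, ← mul_assoc]
  exact mul_le_mul_of_nonneg_right (sq_integral_mul_le_integral_sq_mul_integral_sq hα hh) hθ.le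

lemma integral_integral_mul_div_sub_one_mul_eq_zero [SFinite μX] [SFinite m]
    (hf_meas : Measurable (Function.uncurry f)) (hg_meas : Measurable g)
    (hg_nonneg : ∀ θ, 0 ≤ g θ) (hg_int : ∫ θ, g θ ∂m = 1) (hg_pos : ∀ᵐ θ ∂m, 0 < g θ)
    (hf_int : ∀ᵐ x ∂μX, ∫ θ, f x θ ∂m = 1)
    (hsq : Integrable (fun p : X × Θ => (f p.1 p.2 / g p.2 - 1) ^ 2 * g p.2) (μX.prod m))
    (hα : MemLp α 2 μX) :
    ∫ θ, (∫ x, α x * (f x θ / g θ - 1) ∂μX) * g θ ∂m = 0 := by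
  have hg : Integrable g m := .of_integral_ne_zero (by rw [hg_int]; exact one_ne_zero)
  have hprod : Integrable (Function.uncurry fun x θ => α x * (f x θ / g θ - 1) * g θ)
      (μX.prod m) :=
    integrable_mul_mul_of_integrable_sq_mul hα.aestronglyMeasurable.comp_fst
      ((hf_meas.div (hg_meas.comp measurable_snd)).sub_const _).aestronglyMeasurable
      (hg_meas.comp measurable_snd).aestronglyMeasurable (.of_forall fun p => hg_nonneg p.2)
      (hα.integrable_sq.mul_prod hg) hsq
  calc ∫ θ, (∫ x, α x * (f x θ / g θ - 1) ∂μX) * g θ ∂m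
      = ∫ x, ∫ θ, α x * (f x θ / g θ - 1) * g θ ∂m ∂μX := by
        simp_rw [← integral_mul_const]
        exact (integral_integral_swap hprod).symm
    _ = ∫ x, α x * (1 - 1) ∂μX := by
        refine integral_congr_ae ?_
        filter_upwards [hf_int] with x hx
        have hfx : Integrable (f x) m := .of_integral_ne_zero (by rw [hx]; exact one_ne_zero)
        simp_rw [mul_assoc]
        rw [integral_const_mul, integral_div_sub_one_mul hfx hg (hg_pos.mono fun θ h => h.ne'),
          hx, hg_int]
    _ = 0 := by simp

end Mixture

theorem chiSq_mixture_le_general {X Θ : Type*} [MeasurableSpace X] [MeasurableSpace Θ]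
    (μX : Measure X) [SigmaFinite μX] (m : Measure Θ) [SigmaFinite m]
    (g : Θ → ℝ) (hg_meas : Measurable g) (hg_nonneg : ∀ θ, 0 ≤ g θ)
    (hg_int : ∫ θ, g θ ∂m = 1) (hg_pos : ∀ᵐ θ ∂m, 0 < g θ)
    (f : X → Θ → ℝ) (hf_meas : Measurable (Function.uncurry f))
    (hf_int : ∀ᵐ x ∂μX, ∫ θ, f x θ ∂m = 1)
    (α : X → ℝ) (hα : Integrable α μX) (hα2 : Integrable (fun x => α x ^ 2) μX)
    (hsq : Integrable (fun p : X × Θ => (f p.1 p.2 / g p.2 - 1) ^ 2 * g p.2) (μX.prod m)) :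
    ∫ θ, ((∫ x, α x * f x θ ∂μX) / g θ - 1) ^ 2 * g θ ∂m
      ≤ (∫ x, α x ^ 2 ∂μX) * (∫ x, (∫ θ, (f x θ / g θ - 1) ^ 2 * g θ ∂m) ∂μX)
        + (∫ x, α x ∂μX - 1) ^ 2 := by
  have hg : Integrable g m := .of_integral_ne_zero (by rw [hg_int]; exact one_ne_zero)
  have hα_memLp : MemLp α 2 μX := (memLp_two_iff_integrable_sq hα.aestronglyMeasurable).2 hα2
  set A : Θ → ℝ := fun θ => ∫ x, α x * (f x θ / g θ - 1) ∂μX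
  have hA_meas : AEStronglyMeasurable A m :=
    (hα.aestronglyMeasurable.comp_fst.mul ((hf_meas.div (hg_meas.comp measurable_snd)).sub_const
      _).aestronglyMeasurable).prod_swap.integral_prod_right'
  have hbound := ae_sq_integral_mul_div_sub_one_mul_le hf_meas hg_pos hsq hα_memLp
  have hχ_int : Integrable (fun θ => ∫ x, (f x θ / g θ - 1) ^ 2 * g θ ∂μX) m :=
    hsq.integral_prod_right
  have hA2 : Integrable (fun θ => A θ ^ 2 * g θ) m := by
    refine (hχ_int.const_mul (∫ x, α x ^ 2 ∂μX)).mono'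
      ((hA_meas.pow 2).mul hg_meas.aestronglyMeasurable) ?_
    filter_upwards [hbound] with θ hθ
    rwa [Real.norm_of_nonneg (mul_nonneg (sq_nonneg _) (hg_nonneg θ))]
  have hA1 : Integrable (fun θ => A θ * g θ) m := by
    simpa using integrable_mul_mul_of_integrable_sq_mul (v := fun _ => 1) hA_meas
      aestronglyMeasurable_const hg_meas.aestronglyMeasurable (.of_forall hg_nonneg) hA2
      (by simpa using hg)
  calc ∫ θ, ((∫ x, α x * f x θ ∂μX) / g θ - 1) ^ 2 * g θ ∂m
      = ∫ θ, (A θ + (∫ x, α x ∂μX - 1)) ^ 2 * g θ ∂m := by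
        refine integral_congr_ae ?_
        filter_upwards [ae_integral_mul_div_sub_one_eq hf_meas hg_pos hsq hα hα_memLp] with θ hθ
        rw [hθ]
    _ = ∫ θ, A θ ^ 2 * g θ ∂m + (∫ x, α x ∂μX - 1) ^ 2 := by
        rw [integral_add_const_sq_mul _ hA2 hA1 hg, integral_integral_mul_div_sub_one_mul_eq_zero
          hf_meas hg_meas hg_nonneg hg_int hg_pos hf_int hsq hα_memLp, hg_int]
        ring
    _ ≤ _ := by
        rw [integral_integral_swap hsq, ← integral_const_mul]
        gcongr ?_ + _
        exact integral_mono_ae hA2 (hχ_int.const_mul _) hbound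

/-- Chi-squared divergence of a mixture:
`χ²(∫ α(x) f(x,·) dμ_X ‖ g) ≤ (∫ α²) (∫ χ²(f(x,·) ‖ g)) + (∫ α − 1)²`,
where `χ²(f ‖ g) := ∫ (f/g − 1)² g dm`. -/
theorem chiSq_mixture_le {X Θ : Type*} [MeasurableSpace X] [MeasurableSpace Θ]
    (μX : Measure X) [SigmaFinite μX] (m : Measure Θ) [SigmaFinite m]
    (g : Θ → ℝ) (hg_meas : Measurable g) (hg_nonneg : ∀ θ, 0 ≤ g θ)
    (hg_int : ∫ θ, g θ ∂m = 1) (hg_pos : ∀ᵐ θ ∂m, 0 < g θ)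
    (f : X → Θ → ℝ) (hf_meas : Measurable (Function.uncurry f))
    (hf_int : ∀ᵐ x ∂μX, ∫ θ, f x θ ∂m = 1)
    (α : X → ℝ) (hα : Integrable α μX) (hα2 : Integrable (fun x => α x ^ 2) μX)
    (hχ : Integrable (fun x => ∫ θ, (f x θ / g θ - 1) ^ 2 * g θ ∂m) μX)
    (hsq : Integrable (fun p : X × Θ => (f p.1 p.2 / g p.2 - 1) ^ 2 * g p.2) (μX.prod m)) :
    ∫ θ, ((∫ x, α x * f x θ ∂μX) / g θ - 1) ^ 2 * g θ ∂m
      ≤ (∫ x, α x ^ 2 ∂μX) * (∫ x, (∫ θ, (f x θ / g θ - 1) ^ 2 * g θ ∂m) ∂μX)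
        + (∫ x, α x ∂μX - 1) ^ 2 :=
  chiSq_mixture_le_general μX m g hg_meas hg_nonneg hg_int hg_pos f hf_meas hf_int α hα hα2 hsq
end

section
/- Let (X, m_X) be a measure space, let (ν_x)_{x ∈ X} be a measurable family of probability measures on ℝ^D, let μ be a probability measure on ℝ^D, and let β₁, β₂ : X → ℝ be m_X-integrable functions with ∫ β₁ dm_X = ∫ β₂ dm_X. Then for every bounded differentiable f : ℝ^D → ℝ with ∫ ‖∇f(θ)‖² dμ(θ) ≤ 1, | ∫_X (β₁(x) − β₂(x)) · (∫_{ℝ^D} f dν_x) dm_X(x) | ≤ (1/2) · ( sup_{x, x' ∈ X} ‖ν_x − ν_{x'}‖_{Ḣ⁻¹(μ)} ) · ∫_X |β₁(x) − β₂(x)| dm_X(x), where the supremum is taken in [0, ∞]. Consequently, for ν₁ = ∫ β₁(x) ν_x dm_X(x) and ν₂ = ∫ β₂(x) ν_x dm_X(x), ‖ν₁ − ν₂‖_{Ḣ⁻¹(μ)} is bounded by the same right-hand side. -/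
open MeasureTheory ENNReal

/-- The weighted homogeneous Sobolev norm `‖ν₁ − ν₂‖_{Ḣ⁻¹(μ)}`, valued in `[0, ∞]`. -/
noncomputable def sobolevHneg1 {D : ℕ}
    (μ ν₁ ν₂ : Measure (EuclideanSpace ℝ (Fin D))) : ℝ≥0∞ :=
  ⨆ f ∈ {f : EuclideanSpace ℝ (Fin D) → ℝ |
      (∃ C, ∀ θ, |f θ| ≤ C) ∧ Differentiable ℝ f ∧
      ∫ θ, ‖fderiv ℝ f θ‖ ^ 2 ∂μ ≤ 1},
    ENNReal.ofReal |(∫ θ, f θ ∂ν₁) - ∫ θ, f θ ∂ν₂|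

/-!
Since `∫ (β₁ - β₂) = 0`, the integrand `(β₁ - β₂) g`, with `g x = ∫ f dν_x`, may be recentred
to `(β₁ - β₂) (g - c)` for any constant `c`. Every difference `g x - g x'` is tested against the
admissible `f` in `‖ν_x - ν_x'‖_{Ḣ⁻¹(μ)}`, so the values of `g` lie in an interval of length
`S = sup ‖ν_x - ν_x'‖`, and its midpoint `c` gives `|g - c| ≤ S / 2`.
-/

theorem exists_forall_abs_sub_le_half {ι : Type*} {g : ι → ℝ} {s : ℝ}
    (h : ∀ i j, |g i - g j| ≤ s) : ∃ c, ∀ i, |g i - c| ≤ s / 2 := by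
  rcases isEmpty_or_nonempty ι with hι | hι
  · exact ⟨0, isEmptyElim⟩
  obtain ⟨i₀⟩ := id hι
  have hbddAbove : BddAbove (Set.range g) :=
    ⟨g i₀ + s, by rintro _ ⟨i, rfl⟩; linarith [le_of_abs_le (h i i₀)]⟩
  have hbddBelow : BddBelow (Set.range g) :=
    ⟨g i₀ - s, by rintro _ ⟨i, rfl⟩; linarith [neg_le_of_abs_le (h i i₀)]⟩
  have hspan : (⨆ i, g i) ≤ (⨅ i, g i) + s :=
    ciSup_le fun i => by
      have : g i - s ≤ ⨅ j, g j := le_ciInf fun j => by linarith [le_of_abs_le (h i j)]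
      linarith
  refine ⟨((⨅ i, g i) + ⨆ i, g i) / 2, fun i => abs_le.mpr ⟨?_, ?_⟩⟩ <;>
    linarith [ciInf_le hbddBelow i, le_ciSup hbddAbove i]

section

variable {α : Type*} [MeasurableSpace α] {μ : Measure α} {d g : α → ℝ}

theorem abs_integral_mul_le_of_integral_eq_zero {c r : ℝ} (hd : Integrable d μ)
    (hd₀ : ∫ x, d x ∂μ = 0) (hr : 0 ≤ r) (hgc : ∀ x, |g x - c| ≤ r) :
    |∫ x, d x * g x ∂μ| ≤ r * ∫ x, |d x| ∂μ := by
  by_cases hdg : Integrable (fun x => d x * g x) μ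
  swap
  · rw [integral_undef hdg, abs_zero]
    exact mul_nonneg hr (integral_nonneg fun _ => abs_nonneg _)
  have hrecentre : ∫ x, d x * g x ∂μ = ∫ x, d x * (g x - c) ∂μ := by
    simp_rw [mul_sub]
    rw [integral_sub hdg (hd.mul_const c), integral_mul_const, hd₀, zero_mul, sub_zero]
  calc |∫ x, d x * g x ∂μ| = |∫ x, d x * (g x - c) ∂μ| := by rw [hrecentre]
    _ ≤ ∫ x, |d x * (g x - c)| ∂μ := abs_integral_le_integral_abs
    _ ≤ ∫ x, |d x| * r ∂μ :=
        integral_mono_of_nonneg (.of_forall fun _ => abs_nonneg _) (hd.abs.mul_const r)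
          (.of_forall fun x => by
            simp only [abs_mul]; exact mul_le_mul_of_nonneg_left (hgc x) (abs_nonneg _))
    _ = r * ∫ x, |d x| ∂μ := by rw [integral_mul_const, mul_comm]

theorem ofReal_abs_integral_mul_le_half_mul {S : ℝ≥0∞} (hd : Integrable d μ)
    (hd₀ : ∫ x, d x ∂μ = 0) (hosc : ∀ x y, ENNReal.ofReal |g x - g y| ≤ S) :
    ENNReal.ofReal |∫ x, d x * g x ∂μ| ≤ 1 / 2 * S * ENNReal.ofReal (∫ x, |d x| ∂μ) := by
  rcases eq_or_ne S ⊤ with rfl | hS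
  · rcases (integral_nonneg (f := fun x => |d x|) (μ := μ) fun x => abs_nonneg (d x)).eq_or_lt'
      with hzero | hpos
    · have hd_ae : d =ᵐ[μ] 0 := by
        filter_upwards [(integral_eq_zero_iff_of_nonneg (fun x => abs_nonneg (d x)) hd.abs).mp
          hzero] with x hx
        exact abs_eq_zero.mp hx
      have : ∫ x, d x * g x ∂μ = 0 :=
        integral_eq_zero_of_ae (hd_ae.mono fun x hx => by simp [hx])
      simp [this]
    · rw [mul_top (by norm_num), top_mul (ofReal_pos.mpr hpos).ne']
      exact le_top
  obtain ⟨c, hc⟩ := exists_forall_abs_sub_le_half (s := S.toReal) fun x y =>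
    (ofReal_le_iff_le_toReal hS).mp (hosc x y)
  calc ENNReal.ofReal |∫ x, d x * g x ∂μ|
      ≤ ENNReal.ofReal (S.toReal / 2 * ∫ x, |d x| ∂μ) :=
        ofReal_le_ofReal (abs_integral_mul_le_of_integral_eq_zero hd hd₀ (by positivity) hc)
    _ = 1 / 2 * S * ENNReal.ofReal (∫ x, |d x| ∂μ) := by
        rw [ofReal_mul (by positivity), ofReal_div_of_pos two_pos, ofReal_toReal hS, ofReal_ofNat,
          ENNReal.div_eq_inv_mul, one_div]

end

theorem ofReal_abs_integral_sub_le_sobolevHneg1 {D : ℕ}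
    {μ ν₁ ν₂ : Measure (EuclideanSpace ℝ (Fin D))} {f : EuclideanSpace ℝ (Fin D) → ℝ}
    (hfb : ∃ C, ∀ θ, |f θ| ≤ C) (hfd : Differentiable ℝ f)
    (hfg : ∫ θ, ‖fderiv ℝ f θ‖ ^ 2 ∂μ ≤ 1) :
    ENNReal.ofReal |(∫ θ, f θ ∂ν₁) - ∫ θ, f θ ∂ν₂| ≤ sobolevHneg1 μ ν₁ ν₂ :=
  le_iSup₂_of_le (ι := EuclideanSpace ℝ (Fin D) → ℝ) f ⟨hfb, hfd, hfg⟩ le_rfl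

theorem signed_mixture_sobolev_bound_general {X : Type*} [MeasurableSpace X] (mX : Measure X)
    {D : ℕ} (ν : X → Measure (EuclideanSpace ℝ (Fin D)))
    (μ : Measure (EuclideanSpace ℝ (Fin D)))
    (β₁ β₂ : X → ℝ) (hβ₁ : Integrable β₁ mX) (hβ₂ : Integrable β₂ mX)
    (heq : ∫ x, β₁ x ∂mX = ∫ x, β₂ x ∂mX)
    (f : EuclideanSpace ℝ (Fin D) → ℝ)
    (hfb : ∃ C, ∀ θ, |f θ| ≤ C) (hfd : Differentiable ℝ f)
    (hfg : ∫ θ, ‖fderiv ℝ f θ‖ ^ 2 ∂μ ≤ 1) :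
    ENNReal.ofReal |∫ x, (β₁ x - β₂ x) * ∫ θ, f θ ∂(ν x) ∂mX|
      ≤ (1 / 2 : ℝ≥0∞) * (⨆ x : X, ⨆ x' : X, sobolevHneg1 μ (ν x) (ν x'))
        * ENNReal.ofReal (∫ x, |β₁ x - β₂ x| ∂mX) :=
  ofReal_abs_integral_mul_le_half_mul (hβ₁.sub hβ₂)
    (by rw [integral_sub hβ₁ hβ₂, heq, sub_self])
    fun x x' => (ofReal_abs_integral_sub_le_sobolevHneg1 hfb hfd hfg).trans <|
      le_iSup₂ (f := fun x x' => sobolevHneg1 μ (ν x) (ν x')) x x'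

/-- For two signed mixtures `∫ βᵢ(x) ν_x dm_X(x)` with `∫ β₁ = ∫ β₂`, testing against any
bounded differentiable `f` with `∫ ‖∇f‖² dμ ≤ 1` gives
`|∫ (β₁ − β₂)(x) · (∫ f dν_x) dm_X| ≤ (1/2) · sup_{x,x'} ‖ν_x − ν_{x'}‖_{Ḣ⁻¹(μ)} · ∫ |β₁ − β₂| dm_X`. -/
theorem signed_mixture_sobolev_bound {X : Type*} [MeasurableSpace X] (mX : Measure X)
    {D : ℕ} (ν : X → Measure (EuclideanSpace ℝ (Fin D)))
    (hν : Measurable ν) (hνp : ∀ x, IsProbabilityMeasure (ν x))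
    (μ : Measure (EuclideanSpace ℝ (Fin D))) [IsProbabilityMeasure μ]
    (β₁ β₂ : X → ℝ) (hβ₁ : Integrable β₁ mX) (hβ₂ : Integrable β₂ mX)
    (heq : ∫ x, β₁ x ∂mX = ∫ x, β₂ x ∂mX)
    (f : EuclideanSpace ℝ (Fin D) → ℝ)
    (hfb : ∃ C, ∀ θ, |f θ| ≤ C) (hfd : Differentiable ℝ f)
    (hfg : ∫ θ, ‖fderiv ℝ f θ‖ ^ 2 ∂μ ≤ 1) :
    ENNReal.ofReal |∫ x, (β₁ x - β₂ x) * ∫ θ, f θ ∂(ν x) ∂mX|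
      ≤ (1 / 2 : ℝ≥0∞) * (⨆ x : X, ⨆ x' : X, sobolevHneg1 μ (ν x) (ν x'))
        * ENNReal.ofReal (∫ x, |β₁ x - β₂ x| ∂mX) :=
  signed_mixture_sobolev_bound_general mX ν μ β₁ β₂ hβ₁ hβ₂ heq f hfb hfd hfg
end

section
/- Let a, b, E be real numbers with a ≥ 0, b ≥ 0, E ≥ 0, let γ ∈ [0, 1), and suppose a² − γ·b² = (1 − γ)·E. Then γ·a·b − a² ≤ −(1 − √γ)·E. -/
/-- Key algebraic step of the temporal-difference analysis: if `a, b, E ≥ 0`, `0 ≤ γ < 1`,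
and `a² − γ·b² = (1 − γ)·E`, then `γ·a·b − a² ≤ −(1 − √γ)·E`. -/
theorem td_cross_term_bound (a b E γ : ℝ) (ha : 0 ≤ a) (hb : 0 ≤ b) (hE : 0 ≤ E)
    (hγ0 : 0 ≤ γ) (hγ1 : γ < 1) (h : a ^ 2 - γ * b ^ 2 = (1 - γ) * E) :
    γ * a * b - a ^ 2 ≤ -(1 - Real.sqrt γ) * E := by
  set s := Real.sqrt γ with hs
  have hs0 : 0 ≤ s := Real.sqrt_nonneg γ
  have hs2 : s ^ 2 = γ := Real.sq_sqrt hγ0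
  have hs1 : s < 1 := by
    rw [hs, show (1 : ℝ) = Real.sqrt 1 by simp]
    exact Real.sqrt_lt_sqrt hγ0 hγ1
  have hsq : (s * b) ^ 2 ≤ a ^ 2 := by nlinarith
  have hab : s * b ≤ a := by nlinarith [mul_nonneg hs0 hb]
  have ht : 0 ≤ a - s * b := sub_nonneg.2 hab
  have key : a ^ 2 - γ * b ^ 2 ≤ (1 + s) * (a ^ 2 - γ * (a * b)) := by
    rw [← hs2]
    nlinarith [mul_nonneg hs0 (sq_nonneg (a - s * b)),
      mul_nonneg (mul_nonneg (mul_nonneg (mul_nonneg hs0 hs0) hb) ht) (sub_nonneg.2 hs1.le),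
      mul_nonneg (mul_nonneg (mul_nonneg (mul_nonneg hs0 hs0) hb) hb) (sub_nonneg.2 hγ1.le)]
  have heq : (1 + s) * ((1 - s) * E) = a ^ 2 - γ * b ^ 2 := by
    have : (1 + s) * (1 - s) = 1 - γ := by nlinarith
    rw [← mul_assoc, this]; linarith
  have hpos : (0 : ℝ) < 1 + s := by linarith
  have : (1 - s) * E ≤ a ^ 2 - γ * (a * b) :=
    le_of_mul_le_mul_left (by linarith [key, heq]) hpos
  linarith [this]
end
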